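/- arXiv:1111.1825 — 3 statements merged into one kernel-verified Lean document; each statement's English description precedes it below -/
import Mathlib

section
/- Let F⊂ℝ be compact with Lebesgue measure zero, fractal string (l_j), D∈(0,1) and L>0. If l_j ~ L j^{−1/D} as j→∞, then the S-content 𝓢^D(F) exists and equals 2^{1−D} L^D / (κ_{1−D}(1−D)). -/
open Filter Set Topology MeasureTheory Metric ENNReal

/-- `κ_t = π^{t/2} / Γ(1 + t/2)`. -/
noncomputable def kappa (t : ℝ) : ℝ := Real.pi ^ (t / 2) / Real.Gamma (1 + t / 2)

/-- `(l_j)` is the fractal string of the compact set `F ⊂ ℝ`: a non-increasing sequence of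
positive lengths of the (pairwise disjoint) bounded complementary open intervals of `F`. -/
def IsFractalString (F : Set ℝ) (l : ℕ → ℝ) : Prop :=
  Antitone l ∧ (∀ j, 0 < l j) ∧
  ∃ a b : ℕ → ℝ,
    Pairwise (Function.onFun Disjoint fun j => Set.Ioo (a j) (b j)) ∧
    (∀ j, a j < b j ∧ b j - a j = l j) ∧
    (convexHull ℝ F) \ F = ⋃ j, Set.Ioo (a j) (b j)

/-- Lower S-content of `F ⊂ ℝ`: `liminf_{r→0} 𝓗⁰(∂F_r)/((1−D)κ_{1−D} r^{−D})`. -/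
noncomputable def lowerSContent (F : Set ℝ) (D : ℝ) : ℝ≥0∞ :=
  Filter.liminf
    (fun r : ℝ => μH[(0 : ℝ)] (frontier (cthickening r F)) /
      ENNReal.ofReal ((1 - D) * kappa (1 - D) * r ^ (-D)))
    (𝓝[>] (0 : ℝ))

/-- Upper S-content of `F ⊂ ℝ`. -/
noncomputable def upperSContent (F : Set ℝ) (D : ℝ) : ℝ≥0∞ :=
  Filter.limsup
    (fun r : ℝ => μH[(0 : ℝ)] (frontier (cthickening r F)) /
      ENNReal.ofReal ((1 - D) * kappa (1 - D) * r ^ (-D)))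
    (𝓝[>] (0 : ℝ))

/-! For `r > 0` the closed `r`-neighbourhood of `F` is `[min F - r, max F + r]` with the open
middles `(a j + r, b j - r)` of the gaps longer than `2r` removed. These middles have pairwise
disjoint closures, so the boundary consists of exactly `2 + 2 N(2r)` points, where `N s` is the
number of lengths exceeding `s`. As `l` is non-increasing, `l (N s) ≤ s < l (N s - 1)`, so
`N s * s ^ D` is squeezed between two values of `j * l j ^ D → L ^ D`; hence
`𝓗⁰(∂F_r) r ^ D → 2 ^ (1 - D) L ^ D`. -/

theorem kappa_pos {t : ℝ} (ht : -2 < t) : 0 < kappa t :=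
  div_pos (Real.rpow_pos_of_pos Real.pi_pos _) (Real.Gamma_pos_of_pos (by linarith))

theorem IsFractalString.nonempty {F : Set ℝ} {l : ℕ → ℝ} (hl : IsFractalString F l) :
    F.Nonempty := by
  obtain ⟨-, -, a, b, -, hab, hgap⟩ := hl
  by_contra hF_empty
  rw [not_nonempty_iff_eq_empty.1 hF_empty, convexHull_empty, empty_sdiff] at hgap
  exact (nonempty_Ioo.2 (hab 0).1).ne_empty (iUnion_eq_empty.1 hgap.symm 0)

theorem MeasureTheory.Measure.hausdorffMeasure_zero_finset {X : Type*} [EMetricSpace X]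
    [MeasurableSpace X] [BorelSpace X] (s : Finset X) : μH[0] (s : Set X) = s.card := by
  classical
  induction s using Finset.induction_on with
  | empty => simp
  | insert x s hx ih =>
    rw [Finset.coe_insert, insert_eq,
      measure_union (by simpa using hx) s.finite_toSet.measurableSet,
      Measure.hausdorffMeasure_zero_singleton, ih, Finset.card_insert_of_notMem hx]
    push_cast
    ring

theorem convexHull_eq_Icc_sInf_sSup {F : Set ℝ} (hF : IsCompact F) (hne : F.Nonempty) :
    convexHull ℝ F = Icc (sInf F) (sSup F) := by
  have hbounds : F ⊆ Icc (sInf F) (sSup F) := fun _ hx =>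
    ⟨csInf_le hF.bddBelow hx, le_csSup hF.bddAbove hx⟩
  refine (convexHull_min hbounds (convex_Icc _ _)).antisymm ?_
  rw [← segment_eq_Icc (csInf_le_csSup hne hF.bddBelow hF.bddAbove)]
  exact segment_subset_convexHull (hF.sInf_mem hne) (hF.sSup_mem hne)

section Intervals

variable {ι : Type*} {S : Finset ι} {p q : ℝ} {c d : ι → ℝ}

theorem frontier_Icc_sdiff_biUnion_Ioo (hpq : p < q)
    (hc : ∀ j ∈ S, p < c j) (hcd : ∀ j ∈ S, c j < d j) (hd : ∀ j ∈ S, d j < q)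
    (hdisj : (S : Set ι).PairwiseDisjoint fun j => Icc (c j) (d j)) :
    frontier (Icc p q \ ⋃ j ∈ S, Ioo (c j) (d j)) =
      (({p, q} ∪ S.image c ∪ S.image d : Finset ℝ) : Set ℝ) := by
  have hclosed : IsClosed (Icc p q \ ⋃ j ∈ S, Ioo (c j) (d j)) :=
    isClosed_Icc.sdiff (isOpen_biUnion fun _ _ => isOpen_Ioo)
  have hinterior : interior (Icc p q \ ⋃ j ∈ S, Ioo (c j) (d j)) =
      Ioo p q \ ⋃ j ∈ S, Icc (c j) (d j) := by
    rw [sdiff_eq, interior_inter, interior_Icc, interior_compl, S.closure_biUnion, sdiff_eq]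
    congr 2
    exact iUnion₂_congr fun j hj => closure_Ioo (hcd j hj).ne
  have hendpoint : ∀ i ∈ S, ∀ x ∈ Icc (c i) (d i), x ∉ Ioo (c i) (d i) →
      ∀ j ∈ S, x ∉ Ioo (c j) (d j) := by
    intro i hi x hxi hx j hj hxj
    obtain rfl := hdisj.elim_set hi hj x hxi (Ioo_subset_Icc_self hxj)
    exact hx hxj
  rw [hclosed.frontier_eq, hinterior]
  ext x
  simp only [Finset.coe_union, Finset.coe_insert, Finset.coe_singleton, Finset.coe_image,
    mem_union, mem_insert_iff, mem_singleton_iff, mem_image, Finset.mem_coe, Set.mem_sdiff,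
    mem_iUnion₂, not_exists, not_and, not_forall, not_not]
  constructor
  · rintro ⟨⟨hx, hxS⟩, hint⟩
    by_cases hxpq : x ∈ Ioo p q
    · obtain ⟨j, hj, hxj⟩ := hint hxpq
      have hx_end : x ∈ Icc (c j) (d j) \ Ioo (c j) (d j) := ⟨hxj, hxS j hj⟩
      rw [Icc_sdiff_Ioo_same (hcd j hj).le] at hx_end
      rcases hx_end with rfl | rfl
      exacts [Or.inl (Or.inr ⟨j, hj, rfl⟩), Or.inr ⟨j, hj, rfl⟩]
    · have hx_end : x ∈ Icc p q \ Ioo p q := ⟨hx, hxpq⟩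
      rw [Icc_sdiff_Ioo_same hpq.le] at hx_end
      exact Or.inl (Or.inl hx_end)
  · rintro (((rfl | rfl) | ⟨j, hj, rfl⟩) | ⟨j, hj, rfl⟩)
    · exact ⟨⟨left_mem_Icc.2 hpq.le, fun j hj h => (hc j hj).not_gt h.1⟩,
        fun h => (lt_irrefl _ h.1).elim⟩
    · exact ⟨⟨right_mem_Icc.2 hpq.le, fun j hj h => (hd j hj).not_gt h.2⟩,
        fun h => (lt_irrefl _ h.2).elim⟩
    · have hmem : c j ∈ Icc (c j) (d j) := left_mem_Icc.2 (hcd j hj).le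
      exact ⟨⟨⟨(hc j hj).le, ((hcd j hj).trans (hd j hj)).le⟩,
        hendpoint j hj _ hmem fun h => lt_irrefl _ h.1⟩, fun _ => ⟨j, hj, hmem⟩⟩
    · have hmem : d j ∈ Icc (c j) (d j) := right_mem_Icc.2 (hcd j hj).le
      exact ⟨⟨⟨((hc j hj).trans (hcd j hj)).le, (hd j hj).le⟩,
        hendpoint j hj _ hmem fun h => lt_irrefl _ h.2⟩, fun _ => ⟨j, hj, hmem⟩⟩

theorem card_pair_union_image_union_image (hpq : p < q)
    (hc : ∀ j ∈ S, p < c j) (hcd : ∀ j ∈ S, c j < d j) (hd : ∀ j ∈ S, d j < q)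
    (hdisj : (S : Set ι).PairwiseDisjoint fun j => Icc (c j) (d j)) :
    ({p, q} ∪ S.image c ∪ S.image d : Finset ℝ).card = 2 + 2 * S.card := by
  have hc_inj : Set.InjOn c S := fun i hi j hj h =>
    hdisj.elim_set hi hj (c i) (left_mem_Icc.2 (hcd i hi).le)
      (by rw [h]; exact left_mem_Icc.2 (hcd j hj).le)
  have hd_inj : Set.InjOn d S := fun i hi j hj h =>
    hdisj.elim_set hi hj (d i) (right_mem_Icc.2 (hcd i hi).le)
      (by rw [h]; exact right_mem_Icc.2 (hcd j hj).le)
  have hpq_c : Disjoint ({p, q} : Finset ℝ) (S.image c) := by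
    simp only [Finset.disjoint_right, Finset.mem_image, Finset.mem_insert, Finset.mem_singleton]
    rintro _ ⟨j, hj, rfl⟩ (h | h)
    exacts [(hc j hj).ne' h, ((hcd j hj).trans (hd j hj)).ne h]
  have hpqc_d : Disjoint ({p, q} ∪ S.image c) (S.image d) := by
    simp only [Finset.disjoint_right, Finset.mem_image, Finset.mem_union, Finset.mem_insert,
      Finset.mem_singleton]
    rintro _ ⟨j, hj, rfl⟩ ((h | h) | ⟨i, hi, h⟩)
    · exact ((hc j hj).trans (hcd j hj)).ne' h
    · exact (hd j hj).ne h
    · obtain rfl := hdisj.elim_set hi hj (c i) (left_mem_Icc.2 (hcd i hi).le)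
        (by rw [h]; exact right_mem_Icc.2 (hcd j hj).le)
      exact (hcd i hi).ne h
  rw [Finset.card_union_of_disjoint hpqc_d, Finset.card_union_of_disjoint hpq_c,
    Finset.card_image_of_injOn hc_inj, Finset.card_image_of_injOn hd_inj,
    Finset.card_pair hpq.ne]
  ring

end Intervals

section Gaps

variable {ι : Type*} {F : Set ℝ} {a b : ι → ℝ}

theorem frontier_gap_subset (hF : IsCompact F) (hne : F.Nonempty)
    (hdisj : Pairwise (Function.onFun Disjoint fun j => Ioo (a j) (b j)))
    (hgap : convexHull ℝ F \ F = ⋃ j, Ioo (a j) (b j)) (j : ι) :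
    frontier (Ioo (a j) (b j)) ⊆ F := by
  intro x hx
  have hhull := convexHull_eq_Icc_sInf_sSup hF hne
  have hsub : Ioo (a j) (b j) ⊆ Icc (sInf F) (sSup F) :=
    (hhull ▸ hgap ▸ subset_iUnion _ j).trans sdiff_subset
  by_contra hxF
  have hxhull : x ∈ convexHull ℝ F \ F := ⟨hhull ▸ closure_minimal hsub isClosed_Icc hx.1, hxF⟩
  obtain ⟨i, hi⟩ := mem_iUnion.1 (hgap ▸ hxhull)
  -- the gap containing `x` is a neighbourhood of `x`, so it meets the gap `j`
  obtain ⟨y, hyi, hyj⟩ := mem_closure_iff_nhds.1 hx.1 _ (isOpen_Ioo.mem_nhds hi)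
  obtain rfl : i = j := by_contra fun hij => disjoint_left.1 (hdisj hij) hyi hyj
  exact hx.2 (by rwa [interior_Ioo])

theorem gap_endpoints_mem (hF : IsCompact F) (hne : F.Nonempty)
    (hdisj : Pairwise (Function.onFun Disjoint fun j => Ioo (a j) (b j)))
    (hgap : convexHull ℝ F \ F = ⋃ j, Ioo (a j) (b j)) {j : ι} (hab : a j < b j) :
    a j ∈ F ∧ b j ∈ F := by
  have h := frontier_gap_subset hF hne hdisj hgap j
  rw [frontier_Ioo hab] at h
  exact ⟨h (mem_insert _ _), h (mem_insert_of_mem _ rfl)⟩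

theorem cthickening_eq_Icc_sdiff_iUnion_Ioo (hF : IsCompact F) (hne : F.Nonempty)
    (hdisj : Pairwise (Function.onFun Disjoint fun j => Ioo (a j) (b j)))
    (hab : ∀ j, a j < b j) (hgap : convexHull ℝ F \ F = ⋃ j, Ioo (a j) (b j))
    {r : ℝ} (hr : 0 ≤ r) :
    cthickening r F = Icc (sInf F - r) (sSup F + r) \ ⋃ j, Ioo (a j + r) (b j - r) := by
  have hhull := convexHull_eq_Icc_sInf_sSup hF hne
  ext x
  simp only [hF.cthickening_eq_biUnion_closedBall hr, mem_iUnion₂, mem_closedBall, Real.dist_eq,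
    abs_le, exists_prop]
  constructor
  · rintro ⟨y, hyF, hxy⟩
    have hy : y ∈ Icc (sInf F) (sSup F) := hhull ▸ subset_convexHull ℝ F hyF
    refine ⟨⟨by linarith [hy.1], by linarith [hy.2]⟩, fun hx => ?_⟩
    obtain ⟨j, hj⟩ := mem_iUnion.1 hx
    have hy_gap : y ∈ convexHull ℝ F \ F :=
      hgap ▸ mem_iUnion.2 ⟨j, by constructor <;> linarith [hj.1, hj.2]⟩
    exact hy_gap.2 hyF
  · rintro ⟨⟨hmx, hxM⟩, hx⟩
    by_cases hxm : x < sInf F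
    · exact ⟨sInf F, hF.sInf_mem hne, by constructor <;> linarith⟩
    by_cases hxM' : sSup F < x
    · exact ⟨sSup F, hF.sSup_mem hne, by constructor <;> linarith⟩
    by_cases hxF : x ∈ F
    · exact ⟨x, hxF, by constructor <;> linarith⟩
    have hx_gap : x ∈ convexHull ℝ F \ F :=
      ⟨hhull ▸ ⟨not_lt.1 hxm, not_lt.1 hxM'⟩, hxF⟩
    obtain ⟨j, hj⟩ := mem_iUnion.1 (hgap ▸ hx_gap)
    obtain ⟨haF, hbF⟩ := gap_endpoints_mem hF hne hdisj hgap (hab j)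
    rcases le_or_gt x (a j + r) with h | h
    · exact ⟨a j, haF, by constructor <;> linarith [hj.1]⟩
    · have : b j - r ≤ x := not_lt.1 fun h' => hx (mem_iUnion.2 ⟨j, h, h'⟩)
      exact ⟨b j, hbF, by constructor <;> linarith [hj.2]⟩

theorem iUnion_Ioo_add_sub_eq_biUnion {r : ℝ} {S : Finset ι}
    (hS : ∀ j, j ∈ S ↔ 2 * r < b j - a j) :
    ⋃ j, Ioo (a j + r) (b j - r) = ⋃ j ∈ S, Ioo (a j + r) (b j - r) := by
  refine iUnion_congr fun j => ?_
  by_cases hj : j ∈ S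
  · simp [hj]
  · rw [Ioo_eq_empty (by linarith [not_lt.1 ((hS j).not.1 hj)])]
    simp

theorem hausdorffMeasure_zero_frontier_cthickening (hF : IsCompact F) (hne : F.Nonempty)
    (hdisj : Pairwise (Function.onFun Disjoint fun j => Ioo (a j) (b j)))
    (hab : ∀ j, a j < b j) (hgap : convexHull ℝ F \ F = ⋃ j, Ioo (a j) (b j))
    {r : ℝ} (hr : 0 < r) {S : Finset ι} (hS : ∀ j, j ∈ S ↔ 2 * r < b j - a j) :
    μH[0] (frontier (cthickening r F)) = 2 + 2 * S.card := by
  have hends := fun j => gap_endpoints_mem hF hne hdisj hgap (hab j)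
  have hpq : sInf F - r < sSup F + r := by
    linarith [csInf_le_csSup hne hF.bddBelow hF.bddAbove]
  have hc : ∀ j ∈ S, sInf F - r < a j + r := fun j _ => by
    linarith [csInf_le hF.bddBelow (hends j).1]
  have hcd : ∀ j ∈ S, a j + r < b j - r := fun j hj => by linarith [(hS j).1 hj]
  have hd : ∀ j ∈ S, b j - r < sSup F + r := fun j _ => by
    linarith [le_csSup hF.bddAbove (hends j).2]
  have hshrunk : (S : Set ι).PairwiseDisjoint fun j => Icc (a j + r) (b j - r) := by
    intro i _ j _ hij
    have h := Ioo_disjoint_Ioo.1 (hdisj hij)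
    rw [Function.onFun, Set.disjoint_iff_inter_eq_empty, Icc_inter_Icc, Icc_eq_empty_iff]
    simp only [max_add_add_right, min_sub_sub_right]
    linarith
  rw [cthickening_eq_Icc_sdiff_iUnion_Ioo hF hne hdisj hab hgap hr.le,
    iUnion_Ioo_add_sub_eq_biUnion hS, frontier_Icc_sdiff_biUnion_Ioo hpq hc hcd hd hshrunk,
    Measure.hausdorffMeasure_zero_finset, card_pair_union_image_union_image hpq hc hcd hd hshrunk]
  norm_cast

end Gaps

section Counting

variable {l : ℕ → ℝ} {D L : ℝ}

theorem tendsto_zero_of_tendsto_mul_rpow_inv (hD : 0 < D)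
    (hstring : Tendsto (fun j : ℕ => l j * (j : ℝ) ^ (1 / D)) atTop (𝓝 L)) :
    Tendsto l atTop (𝓝 0) := by
  have hdecay : Tendsto (fun j : ℕ => (j : ℝ) ^ (-(1 / D))) atTop (𝓝 0) :=
    (tendsto_rpow_neg_atTop (by positivity)).comp tendsto_natCast_atTop_atTop
  refine (mul_zero L ▸ hstring.mul hdecay).congr' ?_
  filter_upwards [eventually_gt_atTop 0] with j hj
  rw [mul_assoc, ← Real.rpow_add (Nat.cast_pos.2 hj), add_neg_cancel, Real.rpow_zero, mul_one]

theorem tendsto_mul_rpow_of_tendsto_mul_rpow_inv (hpos : ∀ j, 0 ≤ l j) (hD : 0 < D)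
    (hstring : Tendsto (fun j : ℕ => l j * (j : ℝ) ^ (1 / D)) atTop (𝓝 L)) :
    Tendsto (fun j : ℕ => (j : ℝ) * l j ^ D) atTop (𝓝 (L ^ D)) := by
  refine (hstring.rpow_const (Or.inr hD.le)).congr fun j => ?_
  rw [Real.mul_rpow (hpos j) (by positivity), ← Real.rpow_mul (Nat.cast_nonneg j),
    one_div_mul_cancel hD.ne', Real.rpow_one, mul_comm]

theorem exists_lt_iff_lt_of_antitone (hmono : Antitone l) (hl : Tendsto l atTop (𝓝 0))
    {s : ℝ} (hs : 0 < s) : ∃ n, ∀ j, s < l j ↔ j < n := by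
  classical
  have hex : ∃ j, l j ≤ s := (hl.eventually (ge_mem_nhds hs)).exists
  refine ⟨Nat.find hex, fun j => ⟨fun hj => ?_, fun hj => ?_⟩⟩
  · exact lt_of_not_ge fun h => hj.not_ge ((hmono h).trans (Nat.find_spec hex))
  · exact lt_of_not_ge (Nat.find_min hex hj)

theorem tendsto_count_nhdsGT_zero (hpos : ∀ j, 0 < l j) {N : ℝ → ℕ}
    (hN : ∀ s, 0 < s → ∀ j, s < l j ↔ j < N s) : Tendsto N (𝓝[>] 0) atTop := by
  refine tendsto_atTop.2 fun j => ?_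
  filter_upwards [Ioo_mem_nhdsGT (hpos j)] with s hs
  exact ((hN s hs.1 j).1 hs.2).le

theorem tendsto_count_mul_rpow (hpos : ∀ j, 0 < l j) (hD : 0 < D)
    (hstring : Tendsto (fun j : ℕ => l j * (j : ℝ) ^ (1 / D)) atTop (𝓝 L)) {N : ℝ → ℕ}
    (hN : ∀ s, 0 < s → ∀ j, s < l j ↔ j < N s) :
    Tendsto (fun s => (N s : ℝ) * s ^ D) (𝓝[>] 0) (𝓝 (L ^ D)) := by
  have hseq := tendsto_mul_rpow_of_tendsto_mul_rpow_inv (fun j => (hpos j).le) hD hstring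
  have hN_top := tendsto_count_nhdsGT_zero hpos hN
  have hlower := hseq.comp hN_top
  have hupper : Tendsto (fun s => ((N s - 1 : ℕ) : ℝ) * l (N s - 1) ^ D + s ^ D) (𝓝[>] 0)
      (𝓝 (L ^ D + 0)) := by
    refine (hseq.comp ((tendsto_sub_atTop_nat 1).comp hN_top)).add ?_
    exact (tendsto_id.mono_left nhdsWithin_le_nhds).rpow_const_nhds_zero hD
  rw [add_zero] at hupper
  refine tendsto_of_tendsto_of_tendsto_of_le_of_le' hlower hupper ?_ ?_
  · filter_upwards [self_mem_nhdsWithin] with s (hs : 0 < s)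
    have hls : l (N s) ≤ s := not_lt.1 fun h => lt_irrefl _ ((hN s hs _).1 h)
    exact mul_le_mul_of_nonneg_left
      (Real.rpow_le_rpow (hpos _).le hls hD.le) (Nat.cast_nonneg _)
  · filter_upwards [self_mem_nhdsWithin, hN_top.eventually_ge_atTop 1] with s (hs : 0 < s) hN1
    have hsl : s < l (N s - 1) := (hN s hs _).2 (Nat.sub_lt hN1 one_pos)
    calc (N s : ℝ) * s ^ D = ((N s - 1 : ℕ) : ℝ) * s ^ D + s ^ D := by
          rw [Nat.cast_sub hN1]; ring
      _ ≤ ((N s - 1 : ℕ) : ℝ) * l (N s - 1) ^ D + s ^ D := by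
          gcongr

theorem tendsto_two_mul_nhdsGT_zero : Tendsto (fun r : ℝ => 2 * r) (𝓝[>] 0) (𝓝[>] 0) :=
  tendsto_nhdsWithin_iff.2
    ⟨by simpa using ((continuous_const_mul (2 : ℝ)).tendsto 0).mono_left nhdsWithin_le_nhds,
      eventually_mem_nhdsWithin.mono fun _ hr => mem_Ioi.2 (mul_pos two_pos hr)⟩

theorem tendsto_two_add_two_mul_count_div (hpos : ∀ j, 0 < l j)
    (hD : 0 < D) (hstring : Tendsto (fun j : ℕ => l j * (j : ℝ) ^ (1 / D)) atTop (𝓝 L))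
    {N : ℝ → ℕ} (hN : ∀ s, 0 < s → ∀ j, s < l j ↔ j < N s) (K : ℝ) :
    Tendsto (fun r : ℝ => (2 + 2 * N (2 * r)) / (K * r ^ (-D))) (𝓝[>] 0)
      (𝓝 (2 ^ (1 - D) * L ^ D / K)) := by
  have hlim : Tendsto (fun r : ℝ => (2 * r ^ D + 2 ^ (1 - D) * (N (2 * r) * (2 * r) ^ D)) / K)
      (𝓝[>] 0) (𝓝 ((2 * 0 + 2 ^ (1 - D) * L ^ D) / K)) :=
    ((((tendsto_id.mono_left nhdsWithin_le_nhds).rpow_const_nhds_zero hD).const_mul 2).add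
      (((tendsto_count_mul_rpow hpos hD hstring hN).comp tendsto_two_mul_nhdsGT_zero).const_mul
        _)).div_const _
  rw [mul_zero, zero_add] at hlim
  refine hlim.congr' ?_
  filter_upwards [self_mem_nhdsWithin] with r (hr : 0 < r)
  rw [Real.mul_rpow two_pos.le hr.le, Real.rpow_sub two_pos, Real.rpow_one, Real.rpow_neg hr.le]
  have : 0 < (2 : ℝ) ^ D := by positivity
  have : 0 < r ^ D := by positivity
  field_simp

end Counting

theorem scontent_eq_of_string_asymptotics_general (F : Set ℝ) (hF : IsCompact F)
    (l : ℕ → ℝ) (hl : IsFractalString F l)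
    (D : ℝ) (hD : D ∈ Set.Ioo (0 : ℝ) 1) (L : ℝ)
    (hstring : Filter.Tendsto (fun j : ℕ => l j * (j : ℝ) ^ (1 / D)) Filter.atTop (𝓝 L)) :
    Filter.Tendsto
      (fun r : ℝ => μH[(0 : ℝ)] (frontier (cthickening r F)) /
        ENNReal.ofReal ((1 - D) * kappa (1 - D) * r ^ (-D)))
      (𝓝[>] (0 : ℝ))
      (𝓝 (ENNReal.ofReal ((2 : ℝ) ^ (1 - D) * L ^ D / (kappa (1 - D) * (1 - D))))) := by
  obtain ⟨hD0, hD1⟩ := hD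
  have hne := hl.nonempty
  obtain ⟨hmono, hpos, a, b, hdisj, hab, hgap⟩ := hl
  choose! N hN using fun s (hs : 0 < s) =>
    exists_lt_iff_lt_of_antitone hmono (tendsto_zero_of_tendsto_mul_rpow_inv hD0 hstring) hs
  have hcount (r : ℝ) (hr : 0 < r) :
      μH[0] (frontier (cthickening r F)) = ENNReal.ofReal (2 + 2 * N (2 * r)) := by
    rw [hausdorffMeasure_zero_frontier_cthickening hF hne hdisj (fun j => (hab j).1) hgap hr
        (S := Finset.range (N (2 * r)))
        fun j => by rw [Finset.mem_range, (hab j).2, hN _ (by positivity)],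
      ENNReal.ofReal_add (by norm_num) (by positivity), ENNReal.ofReal_mul (by norm_num),
      ENNReal.ofReal_natCast, ENNReal.ofReal_ofNat, Finset.card_range]
  have hK : 0 < (1 - D) * kappa (1 - D) := mul_pos (by linarith) (kappa_pos (by linarith))
  rw [mul_comm (kappa _)]
  refine (ENNReal.tendsto_ofReal
    (tendsto_two_add_two_mul_count_div hpos hD0 hstring hN _)).congr' ?_
  filter_upwards [self_mem_nhdsWithin] with r (hr : 0 < r)
  rw [hcount r hr, ENNReal.ofReal_div_of_pos (by positivity)]

theorem scontent_eq_of_string_asymptotics (F : Set ℝ) (hF : IsCompact F)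
    (hF0 : volume F = 0) (l : ℕ → ℝ) (hl : IsFractalString F l)
    (D : ℝ) (hD : D ∈ Set.Ioo (0 : ℝ) 1) (L : ℝ) (hL : 0 < L)
    (hstring : Filter.Tendsto (fun j : ℕ => l j * (j : ℝ) ^ (1 / D)) Filter.atTop (𝓝 L)) :
    Filter.Tendsto
      (fun r : ℝ => μH[(0 : ℝ)] (frontier (cthickening r F)) /
        ENNReal.ofReal ((1 - D) * kappa (1 - D) * r ^ (-D)))
      (𝓝[>] (0 : ℝ))
      (𝓝 (ENNReal.ofReal ((2 : ℝ) ^ (1 - D) * L ^ D / (kappa (1 - D) * (1 - D))))) :=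
  scontent_eq_of_string_asymptotics_general F hF l hl D hD L hstring
end

section
/- Let (l_j) be a non-increasing sequence of positive reals tending to 0, D∈(0,1), and J(ε)=#{j: l_j ≥ ε}. Suppose there exist 0<m<M and r₀>0 with m ≤ r^D J(r) ≤ M for all 0<r≤r₀. Then m^{1/D} ≤ liminf_j l_j j^{1/D} and limsup_j l_j j^{1/D} ≤ M^{1/D}. -/
/-! Write `J(r) = #{i | r ≤ l i}`. For `l j < r`, monotonicity gives `J(r) ≤ j`, so
`m ≤ r ^ D * j` on `(l j, r₀]`, and letting `r ↓ l j` yields `m ≤ l j ^ D * j`. Conversely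
`J(l j) ≥ j + 1`, so `l j ^ D * j ≤ M` as soon as `l j ≤ r₀`. Since `l j → 0`, both hold
eventually, and taking `1/D`-th powers turns them into the bounds on `l j * j ^ (1/D)`. -/

open Filter Set Topology

section Counting

variable {α : Type*} [LinearOrder α] {l : ℕ → α}

theorem Antitone.ncard_setOf_le_le_of_lt (hl : Antitone l) {r : α} {j : ℕ} (h : l j < r) :
    {i | r ≤ l i}.ncard ≤ j :=
  calc {i | r ≤ l i}.ncard ≤ (Iio j).ncard :=
        ncard_le_ncard (fun _ hi => not_le.mp fun hji => (h.trans_le hi).not_ge (hl hji))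
          (finite_Iio j)
    _ = j := ncard_Iio_nat j

theorem Antitone.succ_le_ncard_setOf_le (hl : Antitone l) (j : ℕ)
    (hfin : {i | l j ≤ l i}.Finite) : j + 1 ≤ {i | l j ≤ l i}.ncard :=
  calc j + 1 = (Iic j).ncard := (ncard_Iic_nat j).symm
    _ ≤ _ := ncard_le_ncard (fun _ hi => hl hi) hfin

theorem Filter.Tendsto.finite_setOf_le [TopologicalSpace α] [OrderTopology α] {a r : α}
    (h : Tendsto l atTop (𝓝 a)) (hr : a < r) : {j | r ≤ l j}.Finite := by
  have hsmall : ∀ᶠ j in cofinite, l j < r :=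
    Nat.cofinite_eq_atTop ▸ h.eventually (gt_mem_nhds hr)
  simpa only [not_lt] using eventually_cofinite.mp hsmall

end Counting

namespace Real

theorem mul_rpow_one_div_eq {x y D : ℝ} (hx : 0 ≤ x) (hy : 0 ≤ y) (hD : D ≠ 0) :
    x * y ^ (1 / D) = (x ^ D * y) ^ (1 / D) := by
  rw [mul_rpow (rpow_nonneg hx D) hy, ← rpow_mul hx, mul_one_div_cancel hD, rpow_one]

theorem rpow_one_div_le_mul_rpow_one_div {m x y D : ℝ} (hm : 0 ≤ m) (hx : 0 ≤ x) (hy : 0 ≤ y)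
    (hD : 0 < D) (h : m ≤ x ^ D * y) : m ^ (1 / D) ≤ x * y ^ (1 / D) := by
  rw [mul_rpow_one_div_eq hx hy hD.ne']
  exact rpow_le_rpow hm h (one_div_pos.mpr hD).le

theorem mul_rpow_one_div_le_rpow_one_div {M x y D : ℝ} (hx : 0 ≤ x) (hy : 0 ≤ y)
    (hD : 0 < D) (h : x ^ D * y ≤ M) : x * y ^ (1 / D) ≤ M ^ (1 / D) := by
  rw [mul_rpow_one_div_eq hx hy hD.ne']
  exact rpow_le_rpow (by positivity) h (one_div_pos.mpr hD).le

theorem le_rpow_mul_of_forall_Ioc {m a b c D : ℝ} (ha : 0 < a) (hab : a < b)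
    (h : ∀ r ∈ Ioc a b, m ≤ r ^ D * c) : m ≤ a ^ D * c := by
  have hcont : Tendsto (fun r => r ^ D * c) (𝓝[>] a) (𝓝 (a ^ D * c)) :=
    (((continuousAt_rpow_const a D (Or.inl ha.ne')).mul continuousAt_const).tendsto).mono_left
      nhdsWithin_le_nhds
  exact ge_of_tendsto hcont (eventually_of_mem (Ioc_mem_nhdsGT hab) h)

end Real

section StringLengths

variable {l : ℕ → ℝ} {D : ℝ} {j : ℕ}

theorem le_rpow_mul_of_le_rpow_mul_ncard {m r₀ : ℝ} (hl : Antitone l) (hlj : 0 < l j)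
    (hlj₀ : l j < r₀) (hJ : ∀ r, 0 < r → r ≤ r₀ → m ≤ r ^ D * ({i | r ≤ l i}.ncard : ℝ)) :
    m ≤ l j ^ D * j := by
  refine Real.le_rpow_mul_of_forall_Ioc hlj hlj₀ fun r ⟨hjr, hr₀⟩ => ?_
  have hr : 0 < r := hlj.trans hjr
  calc m ≤ r ^ D * ({i | r ≤ l i}.ncard : ℝ) := hJ r hr hr₀
    _ ≤ r ^ D * j := by
      gcongr
      exact_mod_cast hl.ncard_setOf_le_le_of_lt hjr

theorem rpow_mul_le_of_rpow_mul_ncard_le {M : ℝ} (hl : Antitone l) (hlj : 0 ≤ l j)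
    (hfin : {i | l j ≤ l i}.Finite) (hJ : l j ^ D * ({i | l j ≤ l i}.ncard : ℝ) ≤ M) :
    l j ^ D * j ≤ M :=
  calc l j ^ D * j ≤ l j ^ D * ({i | l j ≤ l i}.ncard : ℝ) := by
        gcongr
        exact_mod_cast (Nat.le_succ j).trans (hl.succ_le_ncard_setOf_le j hfin)
    _ ≤ M := hJ

end StringLengths

theorem string_bounds_of_counting_bounds_general (l : ℕ → ℝ) (hl_anti : Antitone l)
    (hl_pos : ∀ j, 0 < l j) (hl_lim : Filter.Tendsto l Filter.atTop (𝓝 0))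
    (D : ℝ) (hD : D ∈ Set.Ioo (0 : ℝ) 1) (m M r₀ : ℝ) (hm : 0 < m)
    (hr₀ : 0 < r₀)
    (hJ : ∀ r : ℝ, 0 < r → r ≤ r₀ →
      m ≤ r ^ D * ({j : ℕ | r ≤ l j}.ncard : ℝ) ∧
        r ^ D * ({j : ℕ | r ≤ l j}.ncard : ℝ) ≤ M) :
    ((m ^ (1 / D) : ℝ) : EReal) ≤
        Filter.liminf (fun j : ℕ => ((l j * (j : ℝ) ^ (1 / D) : ℝ) : EReal)) Filter.atTop ∧
      Filter.limsup (fun j : ℕ => ((l j * (j : ℝ) ^ (1 / D) : ℝ) : EReal)) Filter.atTop ≤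
        ((M ^ (1 / D) : ℝ) : EReal) := by
  have hsmall : ∀ᶠ j in atTop, l j < r₀ := hl_lim.eventually (gt_mem_nhds hr₀)
  constructor
  · refine le_liminf_of_le (h := ?_)
    filter_upwards [hsmall] with j hj
    refine EReal.coe_le_coe_iff.mpr <|
      Real.rpow_one_div_le_mul_rpow_one_div hm.le (hl_pos j).le j.cast_nonneg hD.1 ?_
    exact le_rpow_mul_of_le_rpow_mul_ncard hl_anti (hl_pos j) hj fun r hr hr₀ => (hJ r hr hr₀).1
  · refine limsup_le_of_le (h := ?_)
    filter_upwards [hsmall] with j hj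
    refine EReal.coe_le_coe_iff.mpr <|
      Real.mul_rpow_one_div_le_rpow_one_div (hl_pos j).le j.cast_nonneg hD.1 ?_
    exact rpow_mul_le_of_rpow_mul_ncard_le hl_anti (hl_pos j).le
      (hl_lim.finite_setOf_le (hl_pos j)) (hJ (l j) (hl_pos j) hj.le).2

theorem string_bounds_of_counting_bounds (l : ℕ → ℝ) (hl_anti : Antitone l)
    (hl_pos : ∀ j, 0 < l j) (hl_lim : Filter.Tendsto l Filter.atTop (𝓝 0))
    (D : ℝ) (hD : D ∈ Set.Ioo (0 : ℝ) 1) (m M r₀ : ℝ) (hm : 0 < m) (hmM : m < M)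
    (hr₀ : 0 < r₀)
    (hJ : ∀ r : ℝ, 0 < r → r ≤ r₀ →
      m ≤ r ^ D * ({j : ℕ | r ≤ l j}.ncard : ℝ) ∧
        r ^ D * ({j : ℕ | r ≤ l j}.ncard : ℝ) ≤ M) :
    ((m ^ (1 / D) : ℝ) : EReal) ≤
        Filter.liminf (fun j : ℕ => ((l j * (j : ℝ) ^ (1 / D) : ℝ) : EReal)) Filter.atTop ∧
      Filter.limsup (fun j : ℕ => ((l j * (j : ℝ) ^ (1 / D) : ℝ) : EReal)) Filter.atTop ≤
        ((M ^ (1 / D) : ℝ) : EReal) :=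
  string_bounds_of_counting_bounds_general l hl_anti hl_pos hl_lim D hD m M r₀ hm hr₀ hJ
end

section
/- Let f be a Kneser function of order d≥1 and let h(r)=r^s g(r) with s∈(0,∞) and g:(0,∞)→(0,∞) non-decreasing and differentiable with limsup_{r→0} r g'(r)/g(r) < ∞. If 0 < liminf_{r→0} f(r)/h(r) ≤ limsup_{r→0} f(r)/h(r) < ∞, then 0 < liminf_{r→0} f'_+(r)/h'(r) ≤ limsup_{r→0} f'_−(r)/h'(r) < ∞, where h'(r)=r^{s−1}g(r)(s + r g'(r)/g(r)). -/
/-!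
Writing `y = x ^ d`, a Kneser function `f` of order `d` becomes `G y = f (y ^ d⁻¹)`, a positive
function with `G (μ b) - G (μ a) ≤ μ (G b - G a)`. Positivity forces `G` to be nondecreasing, and
the dilation inequality makes the slopes of `G` along any geometric progression nonincreasing;
since the grid points `A (B / A) ^ (m / n)` are dense in `[A, B]`, monotonicity upgrades this to
concavity of `G` on `(0, ∞)`. Hence `f` has one-sided derivatives, `f'₊ ≤ f'₋`, and they are
controlled by the difference quotients of `G` over `[r ^ d, (K r) ^ d]` and `[(r / 2) ^ d, r ^ d]`.

If `c h ≤ f ≤ C h` near `0` with `h r = r ^ s g r`, choosing `K` with `c K ^ s ≥ 2 C` gives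
`f (K r) - f r ≥ C h r`, while `f r - f (r / 2) ≤ C h r`. Since `g` is nondecreasing and
`r g' r / g r < M` near `0`, `h' r = r ^ (s - 1) g r (s + r g' r / g r)` lies between
`s r ^ (s - 1) g r` and `(s + M) r ^ (s - 1) g r`, and dividing yields the two bounds.
-/

open Filter Set Topology

/-- A Kneser function of order `d`. -/
def IsKneser (f : ℝ → ℝ) (d : ℝ) : Prop :=
  (∀ x : ℝ, 0 < x → 0 < f x) ∧
  ∀ a b lam : ℝ, 0 < a → a ≤ b → 1 ≤ lam →
    f (lam * b) - f (lam * a) ≤ lam ^ d * (f b - f a)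

theorem mul_sub_le_of_antitone_slope {G : ℝ → ℝ} {x : ℕ → ℝ} (hx : StrictMono x)
    (hσ : Antitone fun k => slope G (x k) (x (k + 1))) {l m n : ℕ} (hlm : l ≤ m) (hmn : m ≤ n) :
    (G (x n) - G (x m)) * (x m - x l) ≤ (G (x m) - G (x l)) * (x n - x m) := by
  set σ := fun k => slope G (x k) (x (k + 1))
  have hΔ : ∀ k, G (x (k + 1)) - G (x k) = σ k * (x (k + 1) - x k) := fun k => by
    simp only [σ, slope_def_field]
    rw [div_mul_cancel₀ _ (sub_ne_zero.2 (hx k.lt_succ_self).ne')]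
  have hleft : σ m * (x m - x l) ≤ G (x m) - G (x l) := by
    rw [← Finset.sum_Ico_sub (fun k => G (x k)) hlm, ← Finset.sum_Ico_sub x hlm, Finset.mul_sum]
    refine Finset.sum_le_sum fun k hk => ?_
    rw [hΔ]
    exact mul_le_mul_of_nonneg_right (hσ (Finset.mem_Ico.1 hk).2.le)
      (sub_nonneg.2 (hx.monotone k.le_succ))
  have hright : G (x n) - G (x m) ≤ σ m * (x n - x m) := by
    rw [← Finset.sum_Ico_sub (fun k => G (x k)) hmn, ← Finset.sum_Ico_sub x hmn, Finset.mul_sum]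
    refine Finset.sum_le_sum fun k hk => ?_
    rw [hΔ]
    exact mul_le_mul_of_nonneg_right (hσ (Finset.mem_Ico.1 hk).1)
      (sub_nonneg.2 (hx.monotone k.le_succ))
  calc (G (x n) - G (x m)) * (x m - x l)
      ≤ σ m * (x n - x m) * (x m - x l) :=
        mul_le_mul_of_nonneg_right hright (sub_nonneg.2 (hx.monotone hlm))
    _ = σ m * (x m - x l) * (x n - x m) := by ring
    _ ≤ (G (x m) - G (x l)) * (x n - x m) :=
        mul_le_mul_of_nonneg_right hleft (sub_nonneg.2 (hx.monotone hmn))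

namespace IsKneser

variable {f G : ℝ → ℝ} {d : ℝ}

theorem monotoneOn (hf : IsKneser f d) (hd : 0 ≤ d) : MonotoneOn f (Ioi 0) := by
  rintro A (hA : 0 < A) B - hAB
  by_contra! hlt
  set ρ := B / A
  have hρ : 1 ≤ ρ := (one_le_div hA).2 hAB
  have hAρ : A * ρ = B := mul_div_cancel₀ B hA.ne'
  -- Dilating `[A, B]` by powers of `ρ` keeps every increment below the negative `f B - f A`.
  have hstep : ∀ n : ℕ, f (A * ρ ^ (n + 1)) - f (A * ρ ^ n) ≤ f B - f A := by
    intro n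
    induction n with
    | zero => simp [hAρ]
    | succ n ih =>
      have h := hf.2 (A * ρ ^ n) (A * ρ ^ (n + 1)) ρ (by positivity)
        (by rw [pow_succ, ← mul_assoc]; exact le_mul_of_one_le_right (by positivity) hρ) hρ
      rw [show ρ * (A * ρ ^ (n + 1)) = A * ρ ^ (n + 1 + 1) by ring,
        show ρ * (A * ρ ^ n) = A * ρ ^ (n + 1) by ring] at h
      have hρd : 1 ≤ ρ ^ d := Real.one_le_rpow hρ hd
      nlinarith
  have hdrift : ∀ n : ℕ, f (A * ρ ^ n) ≤ f A + n * (f B - f A) := by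
    intro n
    induction n with
    | zero => simp
    | succ n ih => push_cast; linarith [hstep n]
  obtain ⟨n, hn⟩ := exists_nat_gt (f A / (f A - f B))
  have hpos := hf.1 (A * ρ ^ n) (by positivity)
  rw [div_lt_iff₀ (by linarith)] at hn
  linarith [hdrift n]

theorem slope_mul_le (hG : IsKneser G 1) {a b μ : ℝ} (ha : 0 < a) (hab : a ≤ b) (hμ : 1 ≤ μ) :
    slope G (μ * a) (μ * b) ≤ slope G a b := by
  have h := hG.2 a b μ ha hab hμ
  rw [Real.rpow_one] at h
  rw [slope_def_field, slope_def_field, ← mul_sub,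
    ← mul_div_mul_left (G b - G a) (b - a) (by positivity : μ ≠ 0)]
  exact div_le_div_of_nonneg_right h (mul_nonneg (by positivity) (sub_nonneg.2 hab))

theorem antitone_slope_mul_pow (hG : IsKneser G 1) {A ρ : ℝ} (hA : 0 < A) (hρ : 1 ≤ ρ) :
    Antitone fun k : ℕ => slope G (A * ρ ^ k) (A * ρ ^ (k + 1)) := by
  refine antitone_nat_of_succ_le fun k => ?_
  have h := hG.slope_mul_le (b := A * ρ ^ (k + 1)) (by positivity : 0 < A * ρ ^ k)
    (by rw [pow_succ, ← mul_assoc]; exact le_mul_of_one_le_right (by positivity) hρ) hρ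
  rwa [show ρ * (A * ρ ^ k) = A * ρ ^ (k + 1) by ring,
    show ρ * (A * ρ ^ (k + 1)) = A * ρ ^ (k + 1 + 1) by ring] at h

theorem slope_anti_adjacent_rpow_div (hG : IsKneser G 1) {A B : ℝ} (hA : 0 < A) (hAB : A < B)
    {m n : ℕ} (hmn : m ≤ n) (hn : 0 < n) :
    (G B - G (A * (B / A) ^ ((m : ℝ) / n))) * (A * (B / A) ^ ((m : ℝ) / n) - A) ≤
      (G (A * (B / A) ^ ((m : ℝ) / n)) - G A) * (B - A * (B / A) ^ ((m : ℝ) / n)) := by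
  have hb : 1 < B / A := (one_lt_div hA).2 hAB
  set ρ := (B / A) ^ ((n : ℝ)⁻¹)
  have hρ : 1 < ρ := Real.one_lt_rpow hb (by positivity)
  have hρpow : ∀ k : ℕ, ρ ^ k = (B / A) ^ ((k : ℝ) / n) := fun k => by
    rw [← Real.rpow_natCast, ← Real.rpow_mul (by positivity), inv_mul_eq_div]
  have hx : StrictMono fun k : ℕ => A * ρ ^ k :=
    fun i j hij => mul_lt_mul_of_pos_left (pow_lt_pow_right₀ hρ hij) hA
  have h := mul_sub_le_of_antitone_slope hx (hG.antitone_slope_mul_pow hA hρ.le) (Nat.zero_le m) hmn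
  have hB : A * ρ ^ n = B := by
    rw [hρpow, div_self (by positivity), Real.rpow_one, mul_div_cancel₀ B hA.ne']
  simp only [pow_zero, mul_one] at h
  rwa [hB, hρpow m] at h

theorem concaveOn (hG : IsKneser G 1) : ConcaveOn ℝ (Ioi 0) G := by
  refine concaveOn_of_slope_anti_adjacent (convex_Ioi 0) fun {A t B} (hA : 0 < A) _ hAt htB => ?_
  have ht : 0 < t := hA.trans hAt
  rw [div_le_div_iff₀ (by linarith) (by linarith)]
  suffices G B * (t - A) + G A * (B - t) ≤ G t * (B - A) by linarith
  have hb : 1 < B / A := (one_lt_div hA).2 (hAt.trans htB)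
  set x := Real.logb (B / A) (t / A)
  have htx : A * (B / A) ^ x = t := by
    rw [Real.rpow_logb (by positivity) hb.ne' (by positivity), mul_div_cancel₀ t hA.ne']
  have hx0 : 0 ≤ x := Real.logb_nonneg hb ((one_le_div hA).2 hAt.le)
  have hx1 : x ≤ 1 := by
    rw [Real.logb_le_iff_le_rpow hb (by positivity), Real.rpow_one]
    exact div_le_div_of_nonneg_right htB.le hA.le
  -- `t` is approximated from below by the grid points `A (B/A)^(⌊x n⌋/n)`.
  set τ : ℕ → ℝ := fun n => A * (B / A) ^ ((⌊x * n⌋₊ : ℝ) / n)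
  have hτ : Tendsto τ atTop (𝓝 t) := by
    rw [← htx]
    exact ((continuous_const.mul (Real.continuous_const_rpow (by positivity))).tendsto x).comp
      ((tendsto_nat_floor_mul_div_atTop hx0).comp tendsto_natCast_atTop_atTop)
  have hchord : ∀ n : ℕ, 1 ≤ n → G B * (τ n - A) + G A * (B - τ n) ≤ G t * (B - A) := by
    intro n hn
    have hfloor : (⌊x * n⌋₊ : ℝ) / n ≤ x := by
      rw [div_le_iff₀ (by positivity)]; exact Nat.floor_le (by positivity)
    have hm : ⌊x * n⌋₊ ≤ n := Nat.floor_le_of_le (by nlinarith)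
    have hAτ : A ≤ τ n := le_mul_of_one_le_right hA.le (Real.one_le_rpow hb.le (by positivity))
    have hτt : τ n ≤ t := htx ▸ mul_le_mul_of_nonneg_left
      (Real.rpow_le_rpow_of_exponent_le hb.le hfloor) hA.le
    have hGτ : G (τ n) ≤ G t := hG.monotoneOn zero_le_one (hA.trans_le hAτ) ht hτt
    have h := hG.slope_anti_adjacent_rpow_div hA (hAt.trans htB) hm hn
    nlinarith
  refine le_of_tendsto ?_ (eventually_atTop.2 ⟨1, hchord⟩)
  exact ((hτ.sub_const A).const_mul (G B)).add ((hτ.const_sub B).const_mul (G A))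

theorem comp_rpow_inv (hf : IsKneser f d) (hd : 0 < d) : IsKneser (fun y => f (y ^ d⁻¹)) 1 := by
  refine ⟨fun y hy => hf.1 _ (by positivity), fun a b μ ha hab hμ => ?_⟩
  have h := hf.2 (a ^ d⁻¹) (b ^ d⁻¹) (μ ^ d⁻¹) (by positivity)
    (Real.rpow_le_rpow ha.le hab (by positivity)) (Real.one_le_rpow hμ (by positivity))
  have hμ0 : 0 ≤ μ := zero_le_one.trans hμ
  rw [← Real.mul_rpow hμ0 ha.le, ← Real.mul_rpow hμ0 (ha.le.trans hab),
    Real.rpow_inv_rpow hμ0 hd.ne'] at h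
  simpa only [Real.rpow_one] using h

end IsKneser

theorem hasDerivWithinAt_of_comp_rpow_inv {f : ℝ → ℝ} {d r G' : ℝ} {s t : Set ℝ} (hd : d ≠ 0)
    (hr : 0 < r) (hst : MapsTo (· ^ d) s t)
    (hG : HasDerivWithinAt (fun y => f (y ^ d⁻¹)) G' t (r ^ d)) :
    HasDerivWithinAt f (G' * (d * r ^ (d - 1))) s r := by
  have hf : (fun y => f (y ^ d⁻¹)) ∘ (· ^ d) =ᶠ[𝓝[s] r] f := by
    filter_upwards [nhdsWithin_le_nhds (lt_mem_nhds hr)] with x hx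
    simp only [Function.comp_apply, Real.rpow_rpow_inv hx.le hd]
  have hcomp := hG.comp r (Real.hasDerivAt_rpow_const (Or.inl hr.ne')).hasDerivWithinAt hst
  refine hcomp.congr_of_eventuallyEq hf.symm ?_
  simp only [Function.comp_apply, Real.rpow_rpow_inv hr.le hd]

namespace ConcaveOn

variable {S : Set ℝ} {f : ℝ → ℝ} {x : ℝ}

theorem differentiableWithinAt_Ioi_of_mem_interior (hf : ConcaveOn ℝ S f) (hx : x ∈ interior S) :
    DifferentiableWithinAt ℝ f (Ioi x) x := by
  simpa using (hf.neg.differentiableWithinAt_Ioi_of_mem_interior hx).neg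

theorem differentiableWithinAt_Iio_of_mem_interior (hf : ConcaveOn ℝ S f) (hx : x ∈ interior S) :
    DifferentiableWithinAt ℝ f (Iio x) x := by
  simpa using (hf.neg.differentiableWithinAt_Iio_of_mem_interior hx).neg

theorem rightDeriv_le_leftDeriv_of_mem_interior (hf : ConcaveOn ℝ S f) (hx : x ∈ interior S) :
    derivWithin f (Ioi x) x ≤ derivWithin f (Iio x) x := by
  have h := hf.neg.leftDeriv_le_rightDeriv_of_mem_interior hx
  rw [derivWithin.neg, derivWithin.neg] at h
  exact neg_le_neg_iff.1 h

end ConcaveOn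

namespace IsKneser

variable {f : ℝ → ℝ} {d r : ℝ}

theorem hasDerivWithinAt_Ioi (hf : IsKneser f d) (hd : 0 < d) (hr : 0 < r) :
    HasDerivWithinAt f
      (derivWithin (fun y => f (y ^ d⁻¹)) (Ioi (r ^ d)) (r ^ d) * (d * r ^ (d - 1))) (Ioi r) r :=
  hasDerivWithinAt_of_comp_rpow_inv hd.ne' hr
    (fun _ hx => Real.rpow_lt_rpow hr.le hx hd)
    ((hf.comp_rpow_inv hd).concaveOn.differentiableWithinAt_Ioi_of_mem_interior
      (by rw [interior_Ioi]; exact Real.rpow_pos_of_pos hr d)).hasDerivWithinAt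

theorem hasDerivWithinAt_Iio (hf : IsKneser f d) (hd : 0 < d) (hr : 0 < r) :
    HasDerivWithinAt f
      (derivWithin (fun y => f (y ^ d⁻¹)) (Iio (r ^ d)) (r ^ d) * (d * r ^ (d - 1))) (Iio r) r := by
  have h := hasDerivWithinAt_of_comp_rpow_inv (s := Ioo 0 r) (t := Iio (r ^ d)) hd.ne' hr
    (fun _ hx => Real.rpow_lt_rpow hx.1.le hx.2 hd)
    ((hf.comp_rpow_inv hd).concaveOn.differentiableWithinAt_Iio_of_mem_interior
      (by rw [interior_Ioi]; exact Real.rpow_pos_of_pos hr d)).hasDerivWithinAt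
  exact h.mono_of_mem_nhdsWithin (Ioo_mem_nhdsLT hr)

theorem rightDeriv_le_leftDeriv (hf : IsKneser f d) (hd : 0 < d) (hr : 0 < r) :
    derivWithin f (Ioi r) r ≤ derivWithin f (Iio r) r := by
  rw [(hf.hasDerivWithinAt_Ioi hd hr).derivWithin (uniqueDiffWithinAt_Ioi r),
    (hf.hasDerivWithinAt_Iio hd hr).derivWithin (uniqueDiffWithinAt_Iio r)]
  exact mul_le_mul_of_nonneg_right
    ((hf.comp_rpow_inv hd).concaveOn.rightDeriv_le_leftDeriv_of_mem_interior
      (by rw [interior_Ioi]; exact Real.rpow_pos_of_pos hr d)) (by positivity)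

theorem le_rightDeriv (hf : IsKneser f d) (hd : 0 < d) (hr : 0 < r) {K : ℝ} (hK : 1 < K) :
    d * (f (K * r) - f r) / ((K ^ d - 1) * r) ≤ derivWithin f (Ioi r) r := by
  have hrd : r ^ d ∈ interior (Ioi (0 : ℝ)) := by
    rw [interior_Ioi]; exact Real.rpow_pos_of_pos hr d
  have hGc := (hf.comp_rpow_inv hd).concaveOn
  have hKr : r < K * r := lt_mul_of_one_lt_left hr hK
  have h := hGc.slope_le_rightDeriv (interior_subset hrd)
    (Real.rpow_pos_of_pos (hr.trans hKr) d) (Real.rpow_lt_rpow hr.le hKr hd)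
    (hGc.differentiableWithinAt_Ioi_of_mem_interior hrd)
  rw [(hf.hasDerivWithinAt_Ioi hd hr).derivWithin (uniqueDiffWithinAt_Ioi r)]
  rw [slope_def_field, Real.rpow_rpow_inv (hr.trans hKr).le hd.ne',
    Real.rpow_rpow_inv hr.le hd.ne', Real.mul_rpow (by linarith) hr.le] at h
  have hKd : 1 < K ^ d := Real.one_lt_rpow hK hd
  calc d * (f (K * r) - f r) / ((K ^ d - 1) * r)
      = (f (K * r) - f r) / (K ^ d * r ^ d - r ^ d) * (d * r ^ (d - 1)) := by
        rw [Real.rpow_sub_one hr.ne']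
        field_simp
    _ ≤ _ := mul_le_mul_of_nonneg_right h (by positivity)

theorem leftDeriv_le (hf : IsKneser f d) (hd : 0 < d) (hr : 0 < r) {K : ℝ} (hK : 1 < K) :
    derivWithin f (Iio r) r ≤ d * (f r - f (r / K)) / ((1 - (K ^ d)⁻¹) * r) := by
  have hrd : r ^ d ∈ interior (Ioi (0 : ℝ)) := by
    rw [interior_Ioi]; exact Real.rpow_pos_of_pos hr d
  have hGc := (hf.comp_rpow_inv hd).concaveOn
  have hK0 : 0 < K := zero_lt_one.trans hK
  have hrK : r / K < r := div_lt_self hr hK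
  have h := hGc.leftDeriv_le_slope (Real.rpow_pos_of_pos (by positivity) d) (interior_subset hrd)
    (Real.rpow_lt_rpow (by positivity) hrK hd)
    (hGc.differentiableWithinAt_Iio_of_mem_interior hrd)
  rw [(hf.hasDerivWithinAt_Iio hd hr).derivWithin (uniqueDiffWithinAt_Iio r)]
  rw [slope_def_field, Real.rpow_rpow_inv (x := r / K) (by positivity) hd.ne',
    Real.rpow_rpow_inv hr.le hd.ne', Real.div_rpow hr.le hK0.le] at h
  have hKd : 1 < K ^ d := Real.one_lt_rpow hK hd
  calc derivWithin (fun y => f (y ^ d⁻¹)) (Iio (r ^ d)) (r ^ d) * (d * r ^ (d - 1))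
      ≤ (f r - f (r / K)) / (r ^ d - r ^ d / K ^ d) * (d * r ^ (d - 1)) :=
        mul_le_mul_of_nonneg_right h (by positivity)
    _ = _ := by
        rw [Real.rpow_sub_one hr.ne']
        field_simp

end IsKneser

section Gauge

variable {f : ℝ → ℝ} {d s r γ e C : ℝ}

theorem IsKneser.div_le_rightDeriv_div (hf : IsKneser f d) (hd : 0 < d) (hs : 0 < s) (hr : 0 < r)
    {K M : ℝ} (hK : 1 < K) (hγ : 0 < γ) (he : 0 ≤ e) (heM : e ≤ M) (hC : 0 ≤ C)
    (hgrowth : C * (r ^ s * γ) ≤ f (K * r) - f r) :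
    C * d / ((K ^ d - 1) * (s + M)) ≤ derivWithin f (Ioi r) r / (r ^ (s - 1) * γ * (s + e)) := by
  have hKd : 0 < K ^ d - 1 := sub_pos.2 (Real.one_lt_rpow hK hd)
  have hP : d * (C * (r ^ s * γ)) / ((K ^ d - 1) * r) ≤ derivWithin f (Ioi r) r :=
    le_trans (by gcongr) (hf.le_rightDeriv hd hr hK)
  calc C * d / ((K ^ d - 1) * (s + M))
      = d * (C * (r ^ s * γ)) / ((K ^ d - 1) * r) / (r ^ (s - 1) * γ * (s + M)) := by
        rw [Real.rpow_sub_one hr.ne']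
        field_simp
    _ ≤ _ := div_le_div₀ ((by positivity : (0 : ℝ) ≤ _).trans hP) hP (by positivity) (by gcongr)

theorem IsKneser.leftDeriv_div_le (hf : IsKneser f d) (hd : 0 < d) (hs : 0 < s) (hr : 0 < r)
    (hγ : 0 < γ) (he : 0 ≤ e) (hfr : f r ≤ C * (r ^ s * γ)) :
    derivWithin f (Iio r) r / (r ^ (s - 1) * γ * (s + e)) ≤ C * d / ((1 - (2 ^ d)⁻¹) * s) := by
  have h2d : 0 < 1 - ((2 : ℝ) ^ d)⁻¹ :=
    sub_pos.2 (inv_lt_one_of_one_lt₀ (Real.one_lt_rpow one_lt_two hd))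
  have hCr : 0 ≤ C * (r ^ s * γ) := (hf.1 r hr).le.trans hfr
  have hQ : derivWithin f (Iio r) r ≤ d * (C * (r ^ s * γ)) / ((1 - (2 ^ d)⁻¹) * r) := by
    refine (hf.leftDeriv_le hd hr one_lt_two).trans ?_
    gcongr
    linarith [hf.1 (r / 2) (by positivity)]
  calc derivWithin f (Iio r) r / (r ^ (s - 1) * γ * (s + e))
      ≤ d * (C * (r ^ s * γ)) / ((1 - (2 ^ d)⁻¹) * r) / (r ^ (s - 1) * γ * s) :=
        div_le_div₀ (by positivity) hQ (by positivity) (by gcongr; linarith)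
    _ = _ := by
        rw [Real.rpow_sub_one hr.ne']
        field_simp

theorem mul_le_sub_of_ratio_bounds {g : ℝ → ℝ} {c K : ℝ} (hc : 0 < c) (hr : 0 < r) (hK : 0 < K)
    (hg : 0 < g r) (hgK : g r ≤ g (K * r)) (hKs : 2 * C / c ≤ K ^ s)
    (hlow : c < f (K * r) / ((K * r) ^ s * g (K * r))) (hup : f r / (r ^ s * g r) < C) :
    C * (r ^ s * g r) ≤ f (K * r) - f r := by
  have hfr : f r < C * (r ^ s * g r) := (div_lt_iff₀ (by positivity)).1 hup
  have hfKr : c * ((K * r) ^ s * g (K * r)) < f (K * r) :=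
    (lt_div_iff₀ (by have := hg.trans_le hgK; positivity)).1 hlow
  have hKs' : 2 * C ≤ c * K ^ s := by rw [div_le_iff₀ hc] at hKs; linarith
  have hdil : 2 * C * (r ^ s * g r) ≤ c * ((K * r) ^ s * g (K * r)) := by
    rw [Real.mul_rpow hK.le hr.le]
    calc 2 * C * (r ^ s * g r) ≤ c * K ^ s * (r ^ s * g r) := by gcongr
      _ ≤ c * (K ^ s * r ^ s * g (K * r)) := by
        rw [mul_assoc (K ^ s), ← mul_assoc c]; gcongr
  linarith

end Gauge

section EReal

variable {α : Type*} {l : Filter α} {u v : α → ℝ}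

theorem exists_pos_eventually_lt_of_pos_lt_liminf (h : 0 < liminf (fun x => (u x : EReal)) l) :
    ∃ c > 0, ∀ᶠ x in l, c < u x := by
  obtain ⟨c, hc0, hc⟩ := EReal.lt_iff_exists_real_btwn.1 h
  exact ⟨c, EReal.coe_pos.1 hc0,
    (eventually_lt_of_lt_liminf hc).mono fun _ => EReal.coe_lt_coe_iff.1⟩

theorem exists_pos_eventually_lt_of_limsup_lt_top (h : limsup (fun x => (u x : EReal)) l < ⊤) :
    ∃ C > 0, ∀ᶠ x in l, u x < C := by
  obtain ⟨C, hC, -⟩ := EReal.lt_iff_exists_real_btwn.1 h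
  refine ⟨max C 1, by positivity, (eventually_lt_of_limsup_lt hC).mono fun x hx => ?_⟩
  exact (EReal.coe_lt_coe_iff.1 hx).trans_le (le_max_left _ _)

theorem pos_liminf_le_limsup_lt_top [l.NeBot] {a b : ℝ} (ha : 0 < a)
    (h : ∀ᶠ x in l, a ≤ u x ∧ u x ≤ v x ∧ v x ≤ b) :
    0 < liminf (fun x => (u x : EReal)) l ∧
      liminf (fun x => (u x : EReal)) l ≤ limsup (fun x => (v x : EReal)) l ∧
      limsup (fun x => (v x : EReal)) l < ⊤ := by
  refine ⟨?_, ?_, ?_⟩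
  · calc (0 : EReal) < a := EReal.coe_pos.2 ha
      _ = liminf (fun _ => (a : EReal)) l := (liminf_const _).symm
      _ ≤ _ := liminf_le_liminf (h.mono fun x hx => EReal.coe_le_coe hx.1)
  · exact (liminf_le_liminf (h.mono fun x hx => EReal.coe_le_coe hx.2.1)).trans liminf_le_limsup
  · calc limsup (fun x => (v x : EReal)) l ≤ limsup (fun _ => (b : EReal)) l :=
          limsup_le_limsup (h.mono fun x hx => EReal.coe_le_coe hx.2.2)
      _ < ⊤ := by rw [limsup_const]; exact EReal.coe_lt_top b

end EReal

theorem kneser_two_sided_gauge_deriv_general (f g : ℝ → ℝ) (d s : ℝ) (hd : 1 ≤ d)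
    (hf : IsKneser f d) (hs : 0 < s)
    (hg_pos : ∀ r : ℝ, 0 < r → 0 < g r) (hg_mono : MonotoneOn g (Set.Ioi 0))
    (hg_slow : Filter.limsup (fun r : ℝ => ((r * deriv g r / g r : ℝ) : EReal))
      (𝓝[>] (0 : ℝ)) < ⊤)
    (h1 : 0 < Filter.liminf (fun r : ℝ => ((f r / (r ^ s * g r) : ℝ) : EReal)) (𝓝[>] (0 : ℝ)))
    (h2 : Filter.limsup (fun r : ℝ => ((f r / (r ^ s * g r) : ℝ) : EReal)) (𝓝[>] (0 : ℝ)) < ⊤) :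
    0 < Filter.liminf
        (fun r : ℝ =>
          ((derivWithin f (Set.Ioi r) r /
              (r ^ (s - 1) * g r * (s + r * deriv g r / g r)) : ℝ) : EReal))
        (𝓝[>] (0 : ℝ)) ∧
      Filter.liminf
        (fun r : ℝ =>
          ((derivWithin f (Set.Ioi r) r /
              (r ^ (s - 1) * g r * (s + r * deriv g r / g r)) : ℝ) : EReal))
        (𝓝[>] (0 : ℝ)) ≤
        Filter.limsup
        (fun r : ℝ =>
          ((derivWithin f (Set.Iio r) r /
              (r ^ (s - 1) * g r * (s + r * deriv g r / g r)) : ℝ) : EReal))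
        (𝓝[>] (0 : ℝ)) ∧
      Filter.limsup
        (fun r : ℝ =>
          ((derivWithin f (Set.Iio r) r /
              (r ^ (s - 1) * g r * (s + r * deriv g r / g r)) : ℝ) : EReal))
        (𝓝[>] (0 : ℝ)) < ⊤ := by
  have hd0 : 0 < d := zero_lt_one.trans_le hd
  obtain ⟨c, hc, hc_ev⟩ := exists_pos_eventually_lt_of_pos_lt_liminf h1
  obtain ⟨C, hC, hC_ev⟩ := exists_pos_eventually_lt_of_limsup_lt_top h2
  obtain ⟨M, hM, hM_ev⟩ := exists_pos_eventually_lt_of_limsup_lt_top hg_slow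
  obtain ⟨K, hKs, hK⟩ := (((tendsto_rpow_atTop hs).eventually_ge_atTop (2 * C / c)).and
    (eventually_gt_atTop 1)).exists
  have hKd : 0 < K ^ d - 1 := sub_pos.2 (Real.one_lt_rpow hK hd0)
  refine pos_liminf_le_limsup_lt_top (a := C * d / ((K ^ d - 1) * (s + M)))
    (b := C * d / ((1 - (2 ^ d)⁻¹) * s)) (by positivity) ?_
  filter_upwards [self_mem_nhdsWithin, hC_ev, hM_ev,
    eventually_nhdsGT_zero_mul_left (zero_lt_one.trans hK) hc_ev]
    with r (hr : 0 < r) hCr hMr hcKr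
  have hgr := hg_pos r hr
  have hKr : r ≤ K * r := le_mul_of_one_le_left hr.le hK.le
  have hg' : 0 ≤ deriv g r := by
    rw [← derivWithin_of_mem_nhds (Ioi_mem_nhds hr)]
    exact hg_mono.derivWithin_nonneg
  have he : 0 ≤ r * deriv g r / g r := by positivity
  have hgrowth := mul_le_sub_of_ratio_bounds hc hr (zero_lt_one.trans hK) hgr
    (hg_mono hr (mem_Ioi.2 (hr.trans_le hKr)) hKr) hKs hcKr hCr
  exact ⟨hf.div_le_rightDeriv_div hd0 hs hr hK hgr he hMr.le hC.le hgrowth,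
    div_le_div_of_nonneg_right (hf.rightDeriv_le_leftDeriv hd0 hr) (by positivity),
    hf.leftDeriv_div_le hd0 hs hr hgr he ((div_lt_iff₀ (by positivity)).1 hCr).le⟩

theorem kneser_two_sided_gauge_deriv (f g : ℝ → ℝ) (d s : ℝ) (hd : 1 ≤ d)
    (hf : IsKneser f d) (hs : 0 < s)
    (hg_pos : ∀ r : ℝ, 0 < r → 0 < g r) (hg_mono : MonotoneOn g (Set.Ioi 0))
    (hg_diff : ∀ r : ℝ, 0 < r → DifferentiableAt ℝ g r)
    (hg_slow : Filter.limsup (fun r : ℝ => ((r * deriv g r / g r : ℝ) : EReal))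
      (𝓝[>] (0 : ℝ)) < ⊤)
    (h1 : 0 < Filter.liminf (fun r : ℝ => ((f r / (r ^ s * g r) : ℝ) : EReal)) (𝓝[>] (0 : ℝ)))
    (h2 : Filter.limsup (fun r : ℝ => ((f r / (r ^ s * g r) : ℝ) : EReal)) (𝓝[>] (0 : ℝ)) < ⊤) :
    0 < Filter.liminf
        (fun r : ℝ =>
          ((derivWithin f (Set.Ioi r) r /
              (r ^ (s - 1) * g r * (s + r * deriv g r / g r)) : ℝ) : EReal))
        (𝓝[>] (0 : ℝ)) ∧
      Filter.liminf
        (fun r : ℝ =>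
          ((derivWithin f (Set.Ioi r) r /
              (r ^ (s - 1) * g r * (s + r * deriv g r / g r)) : ℝ) : EReal))
        (𝓝[>] (0 : ℝ)) ≤
        Filter.limsup
        (fun r : ℝ =>
          ((derivWithin f (Set.Iio r) r /
              (r ^ (s - 1) * g r * (s + r * deriv g r / g r)) : ℝ) : EReal))
        (𝓝[>] (0 : ℝ)) ∧
      Filter.limsup
        (fun r : ℝ =>
          ((derivWithin f (Set.Iio r) r /
              (r ^ (s - 1) * g r * (s + r * deriv g r / g r)) : ℝ) : EReal))
        (𝓝[>] (0 : ℝ)) < ⊤ :=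
  kneser_two_sided_gauge_deriv_general f g d s hd hf hs hg_pos hg_mono hg_slow h1 h2
end
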